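/- Gompertz–Stirling formula: define g(n,k) = (1/k!) · iteratedDeriv n (fun x => exp(1 - x - exp(-x)) · (exp(1 - exp(-x)) - 1)^k) 0, the (n,k) entry of the exponential Riordan array [e^{1-x-e^{-x}}, e^{1-e^{-x}}-1]. Then for all natural numbers n and k, g(n,k) = ∑_{j=0}^{n} S2(n+1, j+1) · (-1)^{n-j} · S2(j+1, k+1), where S2(m, ℓ) is the Stirling number of the second kind. In particular g(n,0) = ∑_{j=0}^{n} S2(n+1, j+1)·(-1)^{n-j}. -/

import Mathlib

open Finset

/-- Stirling numbers of the second kind `S2 n k`, the number of partitions of an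
`n`-element set into `k` nonempty blocks, defined by the standard recurrence
`S2 (n+1) (k+1) = (k+1) · S2 n (k+1) + S2 n k` with `S2 0 0 = 1`. -/
def stirlingSecond : ℕ → ℕ → ℕ
  | 0, 0 => 1
  | 0, _ + 1 => 0
  | _ + 1, 0 => 0
  | n + 1, k + 1 => (k + 1) * stirlingSecond n (k + 1) + stirlingSecond n k

lemma st_zero_succ (k : ℕ) : stirlingSecond 0 (k+1) = 0 := rfl
lemma st_succ_zero (n : ℕ) : stirlingSecond (n+1) 0 = 0 := rfl
lemma st_succ (n k : ℕ) : stirlingSecond (n+1) (k+1) = (k+1) * stirlingSecond n (k+1) + stirlingSecond n k := rfl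

lemma st_one (m : ℕ) : stirlingSecond (m+1) 1 = 1 := by
  induction m with
  | zero => rfl
  | succ m ih => rw [st_succ, ih, st_succ_zero]

lemma st_eq_zero_of_lt : ∀ n k, n < k → stirlingSecond n k = 0 := by
  intro n
  induction n with
  | zero => intro k hk; cases k with
    | zero => omega
    | succ k => rfl
  | succ n ih =>
    intro k hk
    cases k with
    | zero => omega
    | succ k =>
      rw [st_succ, ih (k+1) (by omega), ih k (by omega)]
      ring

lemma key_comb : ∀ j k : ℕ,
    ∑ i ∈ range (k+1), (-1 : ℝ)^(k-i) * (k.choose i) * ((i : ℝ)+1)^j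
      = (k.factorial : ℝ) * stirlingSecond (j+1) (k+1) := by
  intro j
  induction j with
  | zero =>
    intro k
    cases k with
    | zero =>
      rw [show stirlingSecond 1 1 = 1 from rfl]
      simp
    | succ k =>
      have h1 : ∑ i ∈ range (k+1+1), (-1 : ℝ)^(k+1-i) * ((k+1).choose i) * ((i : ℝ)+1)^0
          = (-1 : ℝ)^(k+1) * ∑ i ∈ range (k+1+1), (-1 : ℝ)^i * ((k+1).choose i) := by
        rw [Finset.mul_sum]
        refine Finset.sum_congr rfl fun i hi => ?_
        have hik : i ≤ k+1 := by simp at hi; omega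
        have h : (-1 : ℝ)^(k+1-i) * (-1:ℝ)^i = (-1:ℝ)^(k+1) := by
          rw [← pow_add, Nat.sub_add_cancel hik]
        calc (-1 : ℝ)^(k+1-i) * ((k+1).choose i) * ((i : ℝ)+1)^0
            = ((-1 : ℝ)^(k+1-i) * (-1:ℝ)^i) * ((-1:ℝ)^i * ((k+1).choose i)) := by
              rw [pow_zero]
              rw [show ((-1 : ℝ)^(k+1-i) * (-1:ℝ)^i) * ((-1:ℝ)^i * ((k+1).choose i))
                  = (-1 : ℝ)^(k+1-i) * ((-1:ℝ)^i * (-1:ℝ)^i) * ((k+1).choose i) by ring,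
                ← pow_add, ← two_mul, pow_mul]
              norm_num
          _ = (-1 : ℝ)^(k+1) * ((-1:ℝ)^i * ((k+1).choose i)) := by rw [h]
      have h2 : ∑ i ∈ range (k+1+1), (-1 : ℝ)^i * (((k+1).choose i) : ℝ) = 0 := by
        have h3 := Int.alternating_sum_range_choose (n := k+1)
        rw [if_neg (by omega)] at h3
        have := congrArg (fun z : ℤ => (z : ℝ)) h3
        push_cast at this
        convert this using 2
      rw [h1, h2, st_succ, st_eq_zero_of_lt 0 (k+2) (by omega), st_eq_zero_of_lt 0 (k+1) (by omega)]
      push_cast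
      ring
  | succ j ih =>
    intro k
    cases k with
    | zero =>
      simp only [Nat.zero_add, range_one, sum_singleton]
      rw [st_one]
      norm_num
    | succ k =>
      have neg_sum : ∑ i ∈ range (k+2), ((k+1-i : ℕ) : ℝ) * ((k+1).choose i) * (-1 : ℝ)^(k+1-i) * ((i : ℝ)+1)^j
          = -((k:ℝ)+1) * ∑ i ∈ range (k+1), (-1 : ℝ)^(k-i) * (k.choose i) * ((i : ℝ)+1)^j := by
        rw [Finset.sum_range_succ, show k+1-(k+1) = 0 by omega]
        simp only [Nat.cast_zero, zero_mul]
        rw [add_zero, Finset.mul_sum]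
        refine Finset.sum_congr rfl fun i hi => ?_
        have hik : i ≤ k := by simp at hi; omega
        have hc : (k+1-i) * ((k+1).choose i) = (k+1) * (k.choose i) := by
          have h1 := Nat.choose_succ_right_eq (k+1) i
          have h2 := Nat.add_one_mul_choose_eq k i
          calc (k+1-i) * ((k+1).choose i) = (k+1).choose i * (k+1-i) := Nat.mul_comm _ _
            _ = (k+1).choose (i+1) * (i+1) := h1.symm
            _ = (k+1) * (k.choose i) := h2.symm
        have hcr : ((k+1-i : ℕ) : ℝ) * ((k+1).choose i) = ((k:ℝ)+1) * (k.choose i) := by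
          exact_mod_cast congrArg (Nat.cast : ℕ → ℝ) hc
        have hs : k+1-i = (k-i) + 1 := by omega
        rw [hcr, hs, pow_succ]
        ring
      have expand : ∑ i ∈ range (k+2), (-1 : ℝ)^(k+1-i) * ((k+1).choose i) * ((i : ℝ)+1)^(j+1)
          = ((k:ℝ)+2) * (∑ i ∈ range (k+2), (-1 : ℝ)^(k+1-i) * ((k+1).choose i) * ((i : ℝ)+1)^j)
            - (∑ i ∈ range (k+2), ((k+1-i : ℕ) : ℝ) * ((k+1).choose i) * (-1 : ℝ)^(k+1-i) * ((i : ℝ)+1)^j) := by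
        rw [Finset.mul_sum, ← Finset.sum_sub_distrib]
        refine Finset.sum_congr rfl fun i hi => ?_
        have hik : i ≤ k+1 := by simp at hi; omega
        have hcast : ((k+1-i : ℕ) : ℝ) = (k:ℝ)+1-(i:ℝ) := by
          push_cast [Nat.cast_sub hik]; ring
        rw [pow_succ, hcast]
        ring
      rw [expand, neg_sum, ih (k+1), ih k, st_succ (j+1) (k+1)]
      push_cast [Nat.factorial_succ]
      ring

noncomputable def Tf (a : ℝ) (j : ℕ) : ℝ → ℝ :=
  fun x => (Real.exp (-x))^(j+1) * Real.exp (a*(1 - Real.exp (-x)))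

lemma hasDerivAt_Tf (a : ℝ) (j : ℕ) (x : ℝ) :
    HasDerivAt (Tf a j) (-((j:ℝ)+1) * Tf a j x + a * Tf a (j+1) x) x := by
  have hu : HasDerivAt (fun x : ℝ => Real.exp (-x)) (-Real.exp (-x)) x := by
    simpa [Function.comp_def] using (Real.hasDerivAt_exp (-x)).comp x (hasDerivAt_neg x)
  have hpow : HasDerivAt (fun x : ℝ => (Real.exp (-x))^(j+1))
      (((j:ℝ)+1) * (Real.exp (-x))^j * (-Real.exp (-x))) x := by
    simpa using hu.fun_pow (j+1)
  have hinner : HasDerivAt (fun x : ℝ => a * (1 - Real.exp (-x))) (a * Real.exp (-x)) x := by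
    simpa using ((hu.const_sub 1).const_mul a)
  have hexp := hinner.exp
  have h := hpow.fun_mul hexp
  refine h.congr_deriv ?_
  simp only [Tf]
  ring

lemma Tf_zero (a : ℝ) (j : ℕ) : Tf a j 0 = 1 := by
  simp [Tf]

/-- coefficients in the closed form for iterated derivatives -/
noncomputable def cf (a : ℝ) (n j : ℕ) : ℝ :=
  (stirlingSecond (n+1) (j+1) : ℝ) * (-1)^(n-j) * a^j

lemma cf_rec (a : ℝ) (n : ℕ) :
    ∀ j ≤ n+1, -((j:ℝ)+1) * cf a n j + (if j = 0 then 0 else a * cf a n (j-1)) = cf a (n+1) j := by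
  intro j hj
  cases j with
  | zero =>
    rw [if_pos rfl, add_zero]
    unfold cf
    simp only [Nat.zero_add, Nat.sub_zero, pow_zero, mul_one, Nat.cast_zero]
    rw [st_one n, st_one (n+1), pow_succ]
    norm_num
  | succ j' =>
    rw [if_neg (by omega)]
    simp only [Nat.add_sub_cancel]
    unfold cf
    rcases Nat.lt_or_ge j' n with h | h
    · have h2 : (n+1) - (j'+1) = n - j' := by omega
      have h1 : n - j' = (n - (j'+1)) + 1 := by omega
      rw [h2, st_succ (n+1) (j'+1), h1]
      push_cast
      rw [pow_succ, pow_succ]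
      ring
    · have e : n = j' := by omega
      subst e
      have hz : stirlingSecond (n+1) (n+2) = 0 := st_eq_zero_of_lt _ _ (by omega)
      have h2 : (n+1) - (n+1) = 0 := by omega
      rw [h2, st_succ (n+1) (n+1)]
      have h5 : stirlingSecond (n+1) (n+1+1) = 0 := hz
      rw [h5]
      have h3 : n - (n+1) = 0 := by omega
      have h4 : n - n = 0 := by omega
      rw [h3, h4]
      push_cast
      rw [pow_succ]
      ring

lemma iter_Tf (a : ℝ) : ∀ n, iteratedDeriv n (Tf a 0)
    = fun x => ∑ j ∈ range (n+1), cf a n j * Tf a j x := by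
  intro n
  induction n with
  | zero =>
    rw [iteratedDeriv_zero]
    funext x
    rw [show (0:ℕ)+1 = 1 from rfl, range_one, sum_singleton]
    unfold cf
    rw [show (0:ℕ)+1 = 1 from rfl, st_one 0, Nat.sub_zero]
    norm_num
  | succ n ih =>
    rw [iteratedDeriv_succ, ih]
    funext x
    have hsum : HasDerivAt (fun x => ∑ j ∈ range (n+1), cf a n j * Tf a j x)
        (∑ j ∈ range (n+1), cf a n j * (-((j:ℝ)+1) * Tf a j x + a * Tf a (j+1) x)) x :=
      HasDerivAt.fun_sum fun j _ => (hasDerivAt_Tf a j x).const_mul (cf a n j)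
    rw [hsum.deriv]
    have step1 : ∑ j ∈ range (n+1), cf a n j * (-((j:ℝ)+1) * Tf a j x + a * Tf a (j+1) x)
        = (∑ j ∈ range (n+1), -((j:ℝ)+1) * cf a n j * Tf a j x)
          + ∑ j ∈ range (n+1), a * cf a n j * Tf a (j+1) x := by
      rw [← Finset.sum_add_distrib]
      exact Finset.sum_congr rfl fun j _ => by ring
    rw [step1]
    have ext1 : ∑ j ∈ range (n+1), -((j:ℝ)+1) * cf a n j * Tf a j x
        = ∑ j ∈ range (n+2), -((j:ℝ)+1) * cf a n j * Tf a j x := by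
      rw [Finset.sum_range_succ (fun j => -((j:ℝ)+1) * cf a n j * Tf a j x) (n+1)]
      have : cf a n (n+1) = 0 := by
        simp [cf, st_eq_zero_of_lt (n+1) (n+2) (by omega)]
      rw [this]
      ring
    have ext2 : ∑ j ∈ range (n+1), a * cf a n j * Tf a (j+1) x
        = ∑ j ∈ range (n+2), (if j = 0 then 0 else a * cf a n (j-1)) * Tf a j x := by
      conv_rhs => rw [Finset.sum_range_succ' (fun j => (if j = 0 then 0 else a * cf a n (j-1)) * Tf a j x) (n+1)]
      norm_num
    rw [ext1, ext2, ← Finset.sum_add_distrib]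
    refine Finset.sum_congr rfl fun j hj => ?_
    have hjle : j ≤ n+1 := by simp at hj; omega
    rw [show -((j:ℝ)+1) * cf a n j * Tf a j x + (if j = 0 then 0 else a * cf a n (j-1)) * Tf a j x
        = (-((j:ℝ)+1) * cf a n j + (if j = 0 then 0 else a * cf a n (j-1))) * Tf a j x by ring,
      cf_rec a n j hjle]

lemma hasDerivAt_iter_Tf (a : ℝ) (n : ℕ) (x : ℝ) :
    HasDerivAt (iteratedDeriv n (Tf a 0)) (iteratedDeriv (n+1) (Tf a 0) x) x := by
  have h : HasDerivAt (fun x => ∑ j ∈ range (n+1), cf a n j * Tf a j x)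
      (∑ j ∈ range (n+1), cf a n j * (-((j:ℝ)+1) * Tf a j x + a * Tf a (j+1) x)) x :=
    HasDerivAt.fun_sum fun j _ => (hasDerivAt_Tf a j x).const_mul (cf a n j)
  rw [iteratedDeriv_succ, iter_Tf a n]
  rw [h.deriv]
  exact h

lemma iter_sum (m : ℕ) (b : ℕ → ℝ) (av : ℕ → ℝ) :
    ∀ n, iteratedDeriv n (fun x => ∑ i ∈ range m, b i * Tf (av i) 0 x)
      = fun x => ∑ i ∈ range m, b i * iteratedDeriv n (Tf (av i) 0) x := by
  intro n
  induction n with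
  | zero => simp [iteratedDeriv_zero]
  | succ n ih =>
    rw [iteratedDeriv_succ, ih]
    funext x
    have h : HasDerivAt (fun x => ∑ i ∈ range m, b i * iteratedDeriv n (Tf (av i) 0) x)
        (∑ i ∈ range m, b i * iteratedDeriv (n+1) (Tf (av i) 0) x) x :=
      HasDerivAt.fun_sum fun i _ => (hasDerivAt_iter_Tf (av i) n x).const_mul (b i)
    rw [h.deriv]

/-- The `(n,k)` entry of the exponential Riordan array `[e^{1-x-e^{-x}}, e^{1-e^{-x}}-1]`. -/
noncomputable def gompertzEntry (n k : ℕ) : ℝ :=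
  (1 / (k.factorial : ℝ)) *
    iteratedDeriv n
      (fun x : ℝ => Real.exp (1 - x - Real.exp (-x)) * (Real.exp (1 - Real.exp (-x)) - 1) ^ k) 0

lemma F_eq (k : ℕ) :
    (fun x : ℝ => Real.exp (1 - x - Real.exp (-x)) * (Real.exp (1 - Real.exp (-x)) - 1) ^ k)
      = fun x => ∑ i ∈ range (k+1), ((k.choose i : ℝ) * (-1)^(k-i)) * Tf ((i:ℝ)+1) 0 x := by
  funext x
  rw [sub_pow, Finset.mul_sum]
  refine Finset.sum_congr rfl fun i hi => ?_
  have hik : i ≤ k := by simp at hi; omega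
  have hsplit : Real.exp (1 - x - Real.exp (-x))
      = Real.exp (-x) * Real.exp (1 - Real.exp (-x)) := by
    rw [← Real.exp_add]; ring_nf
  have hpow : (Real.exp (1 - Real.exp (-x)))^i = Real.exp ((i:ℝ) * (1 - Real.exp (-x))) := by
    rw [Real.exp_nat_mul]
  have hTf : Tf ((i:ℝ)+1) 0 x
      = Real.exp (-x) * (Real.exp (1 - Real.exp (-x)) * Real.exp ((i:ℝ) * (1 - Real.exp (-x)))) := by
    simp only [Tf, pow_one]
    rw [← Real.exp_add]
    ring_nf
  have hsign : ((-1 : ℝ))^(i+k) = (-1 : ℝ)^(k-i) := by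
    have : i + k = (k-i) + 2*i := by omega
    rw [this, pow_add, pow_mul]
    norm_num
  rw [hsplit, hpow, hTf, hsign, one_pow]
  ring

lemma iter_Tf_at_zero (a : ℝ) (n : ℕ) :
    iteratedDeriv n (Tf a 0) 0
      = ∑ j ∈ range (n+1), (stirlingSecond (n+1) (j+1) : ℝ) * (-1)^(n-j) * a^j := by
  rw [iter_Tf a n]
  refine Finset.sum_congr rfl fun j _ => ?_
  rw [Tf_zero, mul_one, cf]

theorem gompertz_stirling_formula :
    (∀ n k : ℕ, gompertzEntry n k
        = ∑ j ∈ Finset.range (n + 1),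
            (stirlingSecond (n + 1) (j + 1) : ℝ) * (-1 : ℝ) ^ (n - j) *
              (stirlingSecond (j + 1) (k + 1) : ℝ)) ∧
    (∀ n : ℕ, gompertzEntry n 0
        = ∑ j ∈ Finset.range (n + 1),
            (stirlingSecond (n + 1) (j + 1) : ℝ) * (-1 : ℝ) ^ (n - j)) := by
  have main : ∀ n k : ℕ, gompertzEntry n k
      = ∑ j ∈ Finset.range (n + 1),
          (stirlingSecond (n + 1) (j + 1) : ℝ) * (-1 : ℝ) ^ (n - j) *
            (stirlingSecond (j + 1) (k + 1) : ℝ) := by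
    intro n k
    unfold gompertzEntry
    rw [F_eq k, iter_sum (k+1) (fun i => (k.choose i : ℝ) * (-1)^(k-i)) (fun i => (i:ℝ)+1) n]
    have heval : ∑ i ∈ range (k+1), ((k.choose i : ℝ) * (-1)^(k-i)) * iteratedDeriv n (Tf ((i:ℝ)+1) 0) 0
        = ∑ j ∈ range (n+1), (stirlingSecond (n+1) (j+1) : ℝ) * (-1)^(n-j)
            * ((k.factorial : ℝ) * stirlingSecond (j+1) (k+1)) := by
      have h1 : ∀ i ∈ range (k+1), ((k.choose i : ℝ) * (-1)^(k-i)) * iteratedDeriv n (Tf ((i:ℝ)+1) 0) 0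
          = ∑ j ∈ range (n+1), (stirlingSecond (n+1) (j+1) : ℝ) * (-1)^(n-j)
              * ((-1 : ℝ)^(k-i) * (k.choose i) * ((i:ℝ)+1)^j) := by
        intro i _
        rw [iter_Tf_at_zero, Finset.mul_sum]
        exact Finset.sum_congr rfl fun j _ => by ring
      rw [Finset.sum_congr rfl h1, Finset.sum_comm]
      refine Finset.sum_congr rfl fun j _ => ?_
      rw [← Finset.mul_sum, key_comb j k]
    beta_reduce
    rw [heval, Finset.mul_sum]
    refine Finset.sum_congr rfl fun j _ => ?_
    have hfac : (k.factorial : ℝ) ≠ 0 := by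
      exact_mod_cast Nat.factorial_ne_zero k
    field_simp
  refine ⟨main, fun n => ?_⟩
  rw [main n 0]
  refine Finset.sum_congr rfl fun j _ => ?_
  rw [show (0:ℕ)+1 = 1 from rfl, st_one j]
  norm_num
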